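/- Let n ≥ 1, m ≥ 0, let V = Fin (m+1) → Matrix (Fin n) (Fin n) ℂ be the space of coefficient tuples of matrix polynomials of degree ≤ m (each L ∈ V defining the matrix polynomial L(λ) = Σ_{k=0}^{m} L_k λ^k), and let 𝓛 ⊆ V be a locally compact subset. Let φ : ℝ × 𝓛 → 𝓛 be a continuous flow on 𝓛 and A : 𝓛 → ℂ → Matrix (Fin n) (Fin n) ℂ a map such that for every L ∈ 𝓛 and λ ∈ ℂ, t ↦ (φ(t, L))(λ) is differentiable with derivative [(φ(t, L))(λ), A(φ(t, L))(λ)]. If L⁰ ∈ 𝓛 is an isolated point of the isospectral variety S(L⁰) = {L ∈ 𝓛 : det(L(λ) − μ·1) = det(L⁰(λ) − μ·1) for all λ, μ ∈ ℂ}, then φ(t, L⁰) = L⁰ for all t ∈ ℝ, and L⁰ is Lyapunov stable: for every neighborhood U of L⁰ in 𝓛 there is a neighborhood V of L⁰ in 𝓛 with φ(t, L) ∈ U for all L ∈ V and all t ∈ ℝ. -/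

import Mathlib

/-- Evaluation of a tuple of coefficients as a matrix polynomial of degree `≤ m`:
`L(λ) = Σ_{k=0}^{m} L_k λ^k`. -/
noncomputable def matPolyEval {n m : ℕ} (L : Fin (m + 1) → Matrix (Fin n) (Fin n) ℂ)
    (lam : ℂ) : Matrix (Fin n) (Fin n) ℂ :=
  ∑ k : Fin (m + 1), lam ^ (k : ℕ) • L k

/-!
Along a Lax flow `L' = [L, A]` every `det (L(λ) - μ)` is conserved, by Jacobi's formula
`(det M)' = tr (M' · adj M)` and `tr ([M, A] · adj M) = det M · (tr A - tr A) = 0`. Hence the flow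
preserves the continuous map `F : L ↦ (det (L(λ) - μ))_{λ, μ}`, whose fibre through `L⁰` is
isolated. Take a compact neighbourhood `K ⊆ U` of `L⁰` meeting that fibre only in `L⁰`; then
`F '' (K \ interior K)` is compact and misses `F L⁰`, so near `L⁰` the (connected) orbits start
inside `K` in a fibre that avoids `K \ interior K`, and therefore never leave `K`.
Stability then forces `φ (t, L⁰)` into every neighbourhood of `L⁰`, i.e. `L⁰` is fixed.
-/

open Matrix Finset Filter Topology

namespace Matrix

variable {n R : Type*} [Fintype n] [DecidableEq n] [CommRing R]

theorem sum_det_updateRow_eq_trace_mul_adjugate (M N : Matrix n n R) :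
    ∑ i, (M.updateRow i (N i)).det = trace (N * adjugate M) := by
  simp only [← cramer_transpose_apply, cramer_eq_adjugate_mulVec, ← adjugate_transpose, trace,
    diag, mul_apply, mulVec, dotProduct, transpose_apply, mul_comm]

theorem sum_det_updateRow_commutator (M B : Matrix n n R) :
    ∑ i, (M.updateRow i ((M * B - B * M) i)).det = 0 := by
  rw [sum_det_updateRow_eq_trace_mul_adjugate, Matrix.sub_mul, trace_sub, trace_mul_cycle,
    adjugate_mul, Matrix.mul_assoc, mul_adjugate, smul_mul, Matrix.mul_smul, Matrix.one_mul,
    Matrix.mul_one, sub_self]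

end Matrix

section Jacobi

variable {𝕜 𝔸 n : Type*} [Fintype n] [DecidableEq n]

theorem hasDerivAt_det [NontriviallyNormedField 𝕜] [NormedCommRing 𝔸] [NormedAlgebra 𝕜 𝔸]
    {g : 𝕜 → Matrix n n 𝔸} {g' : Matrix n n 𝔸} {t : 𝕜}
    (h : ∀ i j, HasDerivAt (fun s => g s i j) (g' i j) t) :
    HasDerivAt (fun s => (g s).det) (∑ i, ((g t).updateRow i (g' i)).det) t := by
  have hσ (σ : Equiv.Perm n) : HasDerivAt (fun s => ∏ i, g s (σ i) i)
      (∑ i, (∏ j ∈ univ.erase i, g t (σ j) j) • g' (σ i) i) t :=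
    HasDerivAt.fun_finsetProd fun i _ => h (σ i) i
  have hLeibniz (σ : Equiv.Perm n) (i : n) :
      (∏ j ∈ univ.erase i, g t (σ j) j) • g' (σ i) i
        = ∏ j, (g t).updateRow (σ i) (g' (σ i)) (σ j) j := by
    rw [← mul_prod_erase univ _ (mem_univ i), updateRow_self, smul_eq_mul, mul_comm]
    congr 1
    refine prod_congr rfl fun j hj => ?_
    rw [updateRow_ne fun hji => (mem_erase.1 hj).1 (σ.injective hji)]
  simp only [det_apply']
  refine (HasDerivAt.fun_sum fun σ _ =>
    (hσ σ).const_mul ((Equiv.Perm.sign σ : ℤ) : 𝔸)).congr_deriv ?_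
  rw [sum_comm]
  refine sum_congr rfl fun σ _ => ?_
  simp only [mul_sum, hLeibniz]
  exact Equiv.sum_comp σ fun i => _ * ∏ j, (g t).updateRow i (g' i) (σ j) j

variable [RCLike 𝕜] [NormedCommRing 𝔸] [NormedAlgebra 𝕜 𝔸] {g B : 𝕜 → Matrix n n 𝔸}

theorem det_eq_of_hasDerivAt_commutator
    (h : ∀ t i j, HasDerivAt (fun s => g s i j) ((g t * B t - B t * g t) i j) t) (s t : 𝕜) :
    (g s).det = (g t).det := by
  have hdet (t : 𝕜) : HasDerivAt (fun s => (g s).det) 0 t := by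
    simpa only [sum_det_updateRow_commutator] using hasDerivAt_det (h t)
  exact is_const_of_deriv_eq_zero (fun t => (hdet t).differentiableAt) (fun t => (hdet t).deriv) s t

theorem det_sub_smul_one_eq_of_hasDerivAt_commutator
    (h : ∀ t i j, HasDerivAt (fun s => g s i j) ((g t * B t - B t * g t) i j) t)
    (μ : 𝔸) (s t : 𝕜) : (g s - μ • 1).det = (g t - μ • 1).det := by
  refine det_eq_of_hasDerivAt_commutator (g := fun s => g s - μ • 1) (B := B)
    (fun t i j => ?_) s t
  have hshift : (g t - μ • 1) * B t - B t * (g t - μ • 1) = g t * B t - B t * g t := by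
    simp only [Matrix.sub_mul, Matrix.mul_sub, smul_mul, Matrix.mul_smul, Matrix.one_mul,
      Matrix.mul_one]
    abel
  rw [hshift]
  exact (h t i j).sub_const _

end Jacobi

theorem exists_mem_nhds_forall_isPreconnected_fiber_subset {X Y : Type*} [TopologicalSpace X]
    [T2Space X] [LocallyCompactSpace X] [TopologicalSpace Y] [T2Space Y] {F : X → Y}
    (hF : Continuous F) {x₀ : X} (hx₀ : ∀ᶠ x in 𝓝 x₀, F x = F x₀ → x = x₀) {U : Set X}
    (hU : U ∈ 𝓝 x₀) :
    ∃ V ∈ 𝓝 x₀, ∀ x ∈ V, ∀ s : Set X, IsPreconnected s → x ∈ s → s ⊆ F ⁻¹' {F x} → s ⊆ U := by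
  obtain ⟨K, hK, hKsub, hKc⟩ := local_compact_nhds (inter_mem hU hx₀)
  set rim := K \ interior K
  have hrim : IsClosed (F '' rim) := ((hKc.diff isOpen_interior).image hF).isClosed
  have hx₀rim : F x₀ ∉ F '' rim := by
    rintro ⟨y, ⟨hyK, hyint⟩, hy⟩
    exact hyint ((hKsub hyK).2 hy ▸ mem_interior_iff_mem_nhds.2 hK)
  refine ⟨interior K ∩ F ⁻¹' (F '' rim)ᶜ,
    inter_mem (interior_mem_nhds.2 hK) (hrim.isOpen_compl.preimage hF |>.mem_nhds hx₀rim), ?_⟩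
  rintro x ⟨hxK, hxrim⟩ s hs hxs hsF
  have hsK : s ⊆ interior K := by
    refine hs.subset_left_of_subset_union isOpen_interior hKc.isClosed.isOpen_compl
      (disjoint_compl_right.mono_left interior_subset) (fun y hy => ?_)
      ⟨x, hxs, hxK⟩
    by_cases hyK : y ∈ K
    · exact Or.inl (by_contra fun hyint => hxrim ⟨y, ⟨hyK, hyint⟩, hsF hy⟩)
    · exact Or.inr hyK
  exact fun y hy => (hKsub (interior_subset (hsK hy))).1

theorem continuous_matPolyEval {n m : ℕ} (lam : ℂ) :
    Continuous fun L : Fin (m + 1) → Matrix (Fin n) (Fin n) ℂ => matPolyEval L lam :=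
  continuous_finsetSum _ fun k _ => (continuous_apply k).fun_const_smul _

theorem statement2_general (n : ℕ) (m : ℕ)
    (S : Set (Fin (m + 1) → Matrix (Fin n) (Fin n) ℂ))
    [LocallyCompactSpace S]
    (φ : ℝ × S → S) (hφ : Continuous φ)
    (hzero : ∀ x : S, φ (0, x) = x)
    (A : S → ℂ → Matrix (Fin n) (Fin n) ℂ)
    (hLax : ∀ (x : S) (lam : ℂ) (t : ℝ) (i j : Fin n),
      HasDerivAt (fun s : ℝ => matPolyEval (φ (s, x)).1 lam i j)
        ((matPolyEval (φ (t, x)).1 lam * A (φ (t, x)) lam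
          - A (φ (t, x)) lam * matPolyEval (φ (t, x)).1 lam) i j) t)
    (L₀ : S)
    (hiso : ∃ U ∈ nhds L₀, {x : S | x ∈ U ∧ ∀ lam μ : ℂ,
        (matPolyEval x.1 lam - μ • 1).det = (matPolyEval L₀.1 lam - μ • 1).det} = {L₀}) :
    (∀ t : ℝ, φ (t, L₀) = L₀) ∧
      ∀ U ∈ nhds L₀, ∃ V ∈ nhds L₀, ∀ x ∈ V, ∀ t : ℝ, φ (t, x) ∈ U := by
  set F : S → ℂ × ℂ → ℂ := fun x p => (matPolyEval x.1 p.1 - p.2 • 1).det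
  have hF : Continuous F := continuous_pi fun p =>
    (((continuous_matPolyEval p.1).comp continuous_subtype_val).sub continuous_const).matrix_det
  have hFφ (x : S) (t : ℝ) : F (φ (t, x)) = F x := funext fun p =>
    (det_sub_smul_one_eq_of_hasDerivAt_commutator (hLax x p.1) p.2 t 0).trans (by rw [hzero])
  have hL₀ : ∀ᶠ x in 𝓝 L₀, F x = F L₀ → x = L₀ := by
    obtain ⟨U, hU, hUL₀⟩ := hiso
    filter_upwards [hU] with x hx hFx
    exact hUL₀.subset ⟨hx, fun lam μ => congrFun hFx (lam, μ)⟩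
  have hstable (U : Set S) (hU : U ∈ 𝓝 L₀) : ∃ V ∈ 𝓝 L₀, ∀ x ∈ V, ∀ t : ℝ, φ (t, x) ∈ U := by
    obtain ⟨V, hV, hVU⟩ := exists_mem_nhds_forall_isPreconnected_fiber_subset hF hL₀ hU
    have horbit (x : S) : IsPreconnected (Set.range fun t => φ (t, x)) :=
      isPreconnected_range (hφ.comp (Continuous.prodMk_left x))
    refine ⟨V, hV, fun x hx t => hVU x hx _ (horbit x) ⟨0, hzero x⟩ ?_ ⟨t, rfl⟩⟩
    rintro _ ⟨s, rfl⟩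
    exact hFφ x s
  refine ⟨fun t => (specializes_iff_pure.2 (pure_le_iff.2 fun U hU => ?_)).eq, hstable⟩
  obtain ⟨V, hV, hVU⟩ := hstable U hU
  exact hVU L₀ (mem_of_mem_nhds hV) t

/-- If `L⁰` is an isolated point of its isospectral variety inside the
phase space `𝓛` of a flow admitting a Lax representation with spectral parameter, then
`L⁰` is a fixed point of the flow and is Lyapunov stable. -/
theorem statement2 (n : ℕ) (hn : 1 ≤ n) (m : ℕ)
    (S : Set (Fin (m + 1) → Matrix (Fin n) (Fin n) ℂ))
    [LocallyCompactSpace S]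
    (φ : ℝ × S → S) (hφ : Continuous φ)
    (hzero : ∀ x : S, φ (0, x) = x)
    (hadd : ∀ (s t : ℝ) (x : S), φ (s, φ (t, x)) = φ (s + t, x))
    (A : S → ℂ → Matrix (Fin n) (Fin n) ℂ)
    (hLax : ∀ (x : S) (lam : ℂ) (t : ℝ) (i j : Fin n),
      HasDerivAt (fun s : ℝ => matPolyEval (φ (s, x)).1 lam i j)
        ((matPolyEval (φ (t, x)).1 lam * A (φ (t, x)) lam
          - A (φ (t, x)) lam * matPolyEval (φ (t, x)).1 lam) i j) t)
    (L₀ : S)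
    (hiso : ∃ U ∈ nhds L₀, {x : S | x ∈ U ∧ ∀ lam μ : ℂ,
        (matPolyEval x.1 lam - μ • 1).det = (matPolyEval L₀.1 lam - μ • 1).det} = {L₀}) :
    (∀ t : ℝ, φ (t, L₀) = L₀) ∧
      ∀ U ∈ nhds L₀, ∃ V ∈ nhds L₀, ∀ x ∈ V, ∀ t : ℝ, φ (t, x) ∈ U :=
  statement2_general n m S φ hφ hzero A hLax L₀ hiso
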